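/- arXiv:1104.3307 — 2 statements merged into one kernel-verified Lean document; each statement's English description precedes it below -/
import Mathlib

section
/- In ℝ^10 with coordinates indexed by 2-element subsets of {1,…,5}, define v(I)_{jk} = 1 if |I ∩ {j,k}| = 1 and 0 otherwise, and d_a = v({a}). Then the set {v({1,2}), v({3,4}), v({3,5}), v({4,5})} is minimally dependent modulo the span L of d_1,…,d_5: some nontrivial linear combination of these four vectors lies in L, but no nontrivial linear combination of any proper subset of them lies in L. -/
/-!
An element of `L = span {d_a}` is exactly a function on pairs of the form `{j, k} ↦ x j + x k`.
Reading off `∑ c i • w i` at the pairs shows that the combinations lying in `L` are exactly the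
multiples of `(-1, 1, 1, 1)`, witnessed by
`-v({1,2}) + v({3,4}) + v({3,5}) + v({4,5}) = d₃ + d₄ + d₅`;
a nonzero multiple has no vanishing coefficient, so no proper subset is dependent modulo `L`.
-/

/-- Index type: 2-element subsets of {1,…,n} (modeled as `Fin n`, 0-based). -/
def Pair (n : ℕ) := {s : Finset (Fin n) // s.card = 2}

noncomputable instance (n : ℕ) : Fintype (Pair n) := by unfold Pair; infer_instance

/-- The vector v(I): coordinate at the pair {j,k} is 1 iff |I ∩ {j,k}| = 1. -/
def v (n : ℕ) (I : Finset (Fin n)) : Pair n → ℝ :=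
  fun s => if (I ∩ s.val).card = 1 then 1 else 0

/-- d_a = v({a}). -/
def d (n : ℕ) (a : Fin n) : Pair n → ℝ := v n {a}

/-- The four rays of the vital divisor D^{{1,2}} in M_{0,5} (ends modeled 0-based):
w 0 = v({1,2}), w 1 = v({3,4}), w 2 = v({3,5}), w 3 = v({4,5}). -/
def w : Fin 4 → (Pair 5 → ℝ) := ![v 5 {0, 1}, v 5 {2, 3}, v 5 {2, 4}, v 5 {3, 4}]

namespace Pair

variable {n : ℕ}

def mk {j k : Fin n} (h : j ≠ k) : Pair n := ⟨{j, k}, Finset.card_pair h⟩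

theorem exists_eq_mk (p : Pair n) : ∃ (j k : Fin n) (h : j ≠ k), p = mk h := by
  obtain ⟨s, hs⟩ := p
  obtain ⟨j, k, h, rfl⟩ := Finset.card_eq_two.mp hs
  exact ⟨j, k, h, rfl⟩

end Pair

section

variable {n : ℕ}

theorem v_apply_mk (I : Finset (Fin n)) {j k : Fin n} (h : j ≠ k) :
    v n I (Pair.mk h) = if (I ∩ {j, k}).card = 1 then 1 else 0 :=
  rfl

theorem d_apply_mk (a : Fin n) {j k : Fin n} (h : j ≠ k) :
    d n a (Pair.mk h) = if a ∈ ({j, k} : Finset (Fin n)) then 1 else 0 := by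
  by_cases ha : a ∈ ({j, k} : Finset (Fin n)) <;> simp [d, v, Pair.mk, ha]

theorem sum_smul_d_apply_mk (x : Fin n → ℝ) {j k : Fin n} (h : j ≠ k) :
    (∑ a, x a • d n a) (Pair.mk h) = x j + x k := by
  simp only [Finset.sum_apply, Pi.smul_apply, d_apply_mk, smul_eq_mul, mul_boole,
    Finset.sum_ite_mem, Finset.univ_inter, Finset.sum_pair h]

theorem mem_span_range_d_iff (y : Pair n → ℝ) :
    y ∈ Submodule.span ℝ (Set.range (d n)) ↔
      ∃ x : Fin n → ℝ, ∀ (j k : Fin n) (h : j ≠ k), y (Pair.mk h) = x j + x k := by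
  rw [Submodule.mem_span_range_iff_exists_fun]
  refine exists_congr fun x =>
    ⟨fun hx j k h => by rw [← hx, sum_smul_d_apply_mk], fun hx => ?_⟩
  funext p
  obtain ⟨j, k, h, rfl⟩ := p.exists_eq_mk
  rw [hx, sum_smul_d_apply_mk]

end

theorem w_relation_mem_span :
    ∑ i, (![-1, 1, 1, 1] : Fin 4 → ℝ) i • w i ∈ Submodule.span ℝ (Set.range (d 5)) := by
  rw [mem_span_range_d_iff]
  refine ⟨![0, 0, 1, 1, 1], fun j k h => ?_⟩
  fin_cases j <;> fin_cases k <;>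
    simp [Finset.sum_apply, Fin.sum_univ_four, w, v_apply_mk] at h ⊢

theorem sum_smul_w_mem_span_iff (c : Fin 4 → ℝ) :
    ∑ i, c i • w i ∈ Submodule.span ℝ (Set.range (d 5)) ↔
      ∃ t : ℝ, c = t • ![-1, 1, 1, 1] := by
  constructor
  · rw [mem_span_range_d_iff]
    rintro ⟨x, hx⟩
    have coord {j k : Fin 5} (h : j ≠ k) {y : ℝ}
        (hy : (∑ i, c i • w i) (Pair.mk h) = y := by simp [Fin.sum_univ_four, w, v_apply_mk]) :
        y = x j + x k :=
      hy ▸ hx j k h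
    have h01 : 0 = x 0 + x 1 := coord (by decide)
    have h02 : c 0 + c 1 + c 2 = x 0 + x 2 := coord (by decide)
    have h12 : c 0 + c 1 + c 2 = x 1 + x 2 := coord (by decide)
    have h03 : c 0 + c 1 + c 3 = x 0 + x 3 := coord (by decide)
    have h04 : c 0 + c 2 + c 3 = x 0 + x 4 := coord (by decide)
    have h23 : c 2 + c 3 = x 2 + x 3 := coord (by decide)
    have h24 : c 1 + c 3 = x 2 + x 4 := coord (by decide)
    have h34 : c 1 + c 2 = x 3 + x 4 := coord (by decide)
    have h1 : c 1 = -c 0 := by linarith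
    have h2 : c 2 = -c 0 := by linarith
    have h3 : c 3 = -c 0 := by linarith
    refine ⟨-c 0, funext fun i => ?_⟩
    fin_cases i <;> simp [h1, h2, h3]
  · rintro ⟨t, rfl⟩
    simp only [Pi.smul_apply, smul_eq_mul, mul_smul, ← Finset.smul_sum]
    exact Submodule.smul_mem _ t w_relation_mem_span

/-- The set {v({1,2}), v({3,4}), v({3,5}), v({4,5})} is minimally dependent modulo
the lineality space L = span(d₁,…,d₅). -/
theorem vital_divisor_minimally_dependent :
    (∃ c : Fin 4 → ℝ, c ≠ 0 ∧
        ∑ i, c i • w i ∈ Submodule.span ℝ (Set.range (d 5))) ∧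
    ∀ S : Finset (Fin 4), S ≠ Finset.univ →
      ∀ c : Fin 4 → ℝ, (∀ i ∉ S, c i = 0) →
        ∑ i, c i • w i ∈ Submodule.span ℝ (Set.range (d 5)) → c = 0 := by
  refine ⟨⟨_, fun h => by simpa using congrFun h 0, w_relation_mem_span⟩, ?_⟩
  intro S hS c hc hmem
  obtain ⟨i, hi⟩ : ∃ i, i ∉ S := by simpa [Finset.eq_univ_iff_forall] using hS
  obtain ⟨t, rfl⟩ := (sum_smul_w_mem_span_iff c).mp hmem
  have ht : t = 0 := by
    have hti := hc i hi
    fin_cases i <;> simpa using hti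
  simp [ht]
end

section
/- Let T be a finite tree with n ≥ 4 leaves, labeled bijectively by {1,…,n}, in which every non-leaf vertex has degree 3. Call T a caterpillar if every degree-3 vertex of T is adjacent to at least one leaf. Then T can be transformed into a caterpillar by a finite sequence of NNI moves (contracting one internal edge and re-expanding the resulting degree-4 vertex in a different way). -/
/-- Two subsets A, B of the leaf set are compatible splits if one of the four
corners A∩B, A\B, B\A, (A∪B)ᶜ is empty, i.e. the bipartitions {A,Aᶜ}, {B,Bᶜ}
can be realized by two edges of a common tree. -/
def Compatible {n : ℕ} (A B : Finset (Fin n)) : Prop :=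
  A ⊆ B ∨ B ⊆ A ∨ A ∩ B = ∅ ∨ A ∪ B = Finset.univ

/-- A trivalent tree with n labeled leaves, encoded (up to isomorphism) by its
set of nontrivial splits: a pairwise compatible, complement-closed family of
subsets A with 2 ≤ |A| ≤ n-2, consisting of exactly n-3 complementary pairs
(i.e. 2(n-3) sets).  Such maximal compatible split systems correspond exactly
to isomorphism classes of trees with n labeled leaves all of whose internal
vertices have degree 3. -/
structure TrivalentTree (n : ℕ) where
  splits : Finset (Finset (Fin n))
  card_le : ∀ A ∈ splits, 2 ≤ A.card ∧ A.card ≤ n - 2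
  compat : ∀ A ∈ splits, ∀ B ∈ splits, Compatible A B
  compl_mem : ∀ A ∈ splits, Finset.univ \ A ∈ splits
  card_eq : splits.card = 2 * (n - 3)

/-- The NNI graph: two trivalent trees are adjacent iff they differ in exactly
one complementary pair of splits, i.e. exactly when one is obtained from the
other by contracting one internal edge and re-expanding the resulting 4-valent
vertex in one of the two other ways. -/
def NNIGraph (n : ℕ) : SimpleGraph (TrivalentTree n) where
  Adj T T' := (T.splits \ T'.splits).card = 2 ∧ (T'.splits \ T.splits).card = 2
  symm := ⟨fun _ _ h => ⟨h.2, h.1⟩⟩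
  loopless := ⟨fun T h => by simp [Finset.sdiff_self] at h⟩

/-- A caterpillar tree: for some ordering π of the leaves, the splits are
exactly the prefixes {i : π(i) < k} for 2 ≤ k ≤ n-2 and their complements.
Equivalently, every internal (degree-3) vertex of the tree is adjacent to a
leaf. -/
def IsCaterpillar {n : ℕ} (T : TrivalentTree n) : Prop :=
  ∃ π : Fin n ≃ Fin n,
    T.splits =
      ((Finset.Icc 2 (n - 2)).image fun k =>
          Finset.univ.filter fun i => (π i : ℕ) < k) ∪
      ((Finset.Icc 2 (n - 2)).image fun k =>
          Finset.univ.filter fun i => k ≤ (π i : ℕ))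

/-! Root every tree at a fixed leaf `z`. A split is then recorded by its side avoiding `z`
(a cluster), the clusters form a laminar family of `n - 3` sets, and the tree is a caterpillar
as soon as they form a chain. Otherwise take disjoint clusters `A`, `B` with `#A + #B`
maximal: they are siblings, and the NNI move that swaps `B` with a child `A₁` of `A` (or
symmetrically) replaces the cluster `A` by `(A \ A₁) ∪ B`, which is larger because
`#A₁ < #B` for one of the two choices. The total size of the clusters is bounded, so
finitely many such moves reach a caterpillar. -/

open Finset

section Laminar

variable {α : Type*}

def Laminar (A B : Finset α) : Prop :=
  A ⊆ B ∨ B ⊆ A ∨ Disjoint A B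

def IsLaminar (F : Finset (Finset α)) : Prop :=
  ∀ A ∈ F, ∀ B ∈ F, Laminar A B

theorem Laminar.refl (A : Finset α) : Laminar A A :=
  Or.inl subset_rfl

theorem Laminar.symm {A B : Finset α} (h : Laminar A B) : Laminar B A := by
  rcases h with h | h | h
  exacts [Or.inr (Or.inl h), Or.inl h, Or.inr (Or.inr h.symm)]

theorem IsLaminar.exists_disjoint_of_not_isChain {F : Finset (Finset α)} (hF : IsLaminar F)
    (h : ¬IsChain (· ⊆ ·) (F : Set (Finset α))) : ∃ A ∈ F, ∃ B ∈ F, Disjoint A B := by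
  contrapose! h
  intro A hA B hB _
  rcases hF A hA B hB with hAB | hBA | hAB
  exacts [Or.inl hAB, Or.inr hBA, absurd hAB (h A hA B hB)]

variable [DecidableEq α]

/-- A disjoint pair with `#A + #B` maximal works: a member strictly containing `A` and disjoint
from `B` would give a heavier pair. -/
theorem IsLaminar.exists_disjoint_forall_laminar_union {F : Finset (Finset α)} (hF : IsLaminar F)
    (h : ∃ A ∈ F, ∃ B ∈ F, Disjoint A B) :
    ∃ A ∈ F, ∃ B ∈ F, Disjoint A B ∧ ∀ M ∈ F, Laminar M (A ∪ B) := by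
  obtain ⟨⟨A, B⟩, hp, hmax⟩ := ((F ×ˢ F).filter fun p => Disjoint p.1 p.2).exists_max_image
    (fun p => #p.1 + #p.2) (by obtain ⟨A, hA, B, hB, h⟩ := h; exact ⟨(A, B), by simp [*]⟩)
  simp only [mem_filter, mem_product] at hp hmax
  obtain ⟨⟨hA, hB⟩, hAB⟩ := hp
  have hA_max : ∀ M ∈ F, A ⊆ M → Disjoint M B → M ⊆ A := fun M hM hAM hMB => by
    have := hmax (M, B) ⟨⟨hM, hB⟩, hMB⟩
    exact (eq_of_subset_of_card_le hAM (by dsimp at this; omega)).ge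
  have hB_max : ∀ M ∈ F, B ⊆ M → Disjoint A M → M ⊆ B := fun M hM hBM hAM => by
    have := hmax (A, M) ⟨⟨hA, hM⟩, hAM⟩
    exact (eq_of_subset_of_card_le hBM (by dsimp at this; omega)).ge
  refine ⟨A, hA, B, hB, hAB, fun M hM => ?_⟩
  rcases hF M hM A hA with hMA | hAM | hMA
  · exact Or.inl (hMA.trans subset_union_left)
  · rcases hF M hM B hB with hMB | hBM | hMB
    · exact Or.inl (hMB.trans subset_union_right)
    · exact Or.inr (Or.inl (union_subset hAM hBM))
    · exact Or.inl ((hA_max M hM hAM hMB).trans subset_union_left)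
  · rcases hF M hM B hB with hMB | hBM | hMB
    · exact Or.inl (hMB.trans subset_union_right)
    · exact Or.inl ((hB_max M hM hBM hMA.symm).trans subset_union_right)
    · exact Or.inr (Or.inr (disjoint_union_right.2 ⟨hMA, hMB⟩))

/-- `A₁` is a maximal member of the family strictly inside `A`, or a singleton if there is none. -/
theorem IsLaminar.exists_block {F : Finset (Finset α)} (hF : IsLaminar F) {A : Finset α}
    (hA : A.Nontrivial) :
    ∃ A₁ : Finset α, A₁.Nonempty ∧ A₁ ⊂ A ∧ ∀ M ∈ F, M ⊂ A → M ⊆ A₁ ∨ Disjoint M A₁ := by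
  obtain ⟨a, ha⟩ := hA.nonempty
  have hsingle : ∀ b ∈ A, {b} ⊂ A := fun b hb =>
    Finset.ssubset_iff_subset_ne.2 ⟨singleton_subset_iff.2 hb, fun h => hA.ne_singleton h.symm⟩
  obtain ⟨A₁, hA₁, hmax⟩ := ((F ∪ A.image singleton).filter (· ⊂ A)).exists_maximal
    ⟨{a}, by simp [ha, hsingle a ha]⟩
  simp only [mem_filter, mem_union, mem_image] at hA₁ hmax
  have hlam : ∀ M ∈ F, Laminar M A₁ := by
    rcases hA₁.1 with hA₁F | ⟨b, -, rfl⟩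
    · exact fun M hM => hF M hM A₁ hA₁F
    · intro M _
      by_cases hb : b ∈ M
      exacts [Or.inr (Or.inl (singleton_subset_iff.2 hb)),
        Or.inr (Or.inr (disjoint_singleton_right.2 hb))]
  refine ⟨A₁, ?_, hA₁.2, fun M hM hMA => ?_⟩
  · rw [nonempty_iff_ne_empty]
    rintro rfl
    exact singleton_ne_empty a
      (subset_empty.1 (hmax ⟨Or.inr ⟨a, ha, rfl⟩, hsingle a ha⟩ (empty_subset _)))
  · rcases hlam M hM with h | h | h
    exacts [Or.inl h, Or.inl (hmax ⟨Or.inl hM, hMA⟩ h), Or.inr h]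

end Laminar

section Rotation

variable {α : Type*} [DecidableEq α] {F : Finset (Finset α)} {A B A₁ : Finset α}

theorem Finset.sdiff_insert_erase {s : Finset α} {a b : α} (ha : a ∈ s) (hb : b ∉ s) :
    s \ insert b (s.erase a) = {a} := by
  ext x
  grind

theorem Finset.insert_erase_sdiff {s : Finset α} {a b : α} (hb : b ∉ s) :
    insert b (s.erase a) \ s = {b} := by
  ext x
  grind

/-- In the rooted picture: `A ∪ B` has children `A` and `B`, and `A₁` is a child of `A`; the
rotation replaces the cluster `A` by `(A \ A₁) ∪ B`. -/
theorem IsLaminar.laminar_rotate (hF : IsLaminar F) (hA : A ∈ F) (hB : B ∈ F)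
    (hAne : A.Nonempty) (hBne : B.Nonempty) (hAB : Disjoint A B)
    (hP : ∀ M ∈ F, Laminar M (A ∪ B)) (hA₁ : ∀ M ∈ F, M ⊂ A → M ⊆ A₁ ∨ Disjoint M A₁)
    {M : Finset α} (hM : M ∈ F) (hMA : M ≠ A) :
    Laminar M (A \ A₁ ∪ B) := by
  rcases hF M hM A hA with hMA' | hAM | hMA'
  · rcases hA₁ M hM (Finset.ssubset_iff_subset_ne.2 ⟨hMA', hMA⟩) with hMA₁ | hMA₁
    · exact Or.inr (Or.inr (disjoint_union_right.2
        ⟨disjoint_sdiff.mono_left hMA₁, hAB.mono_left hMA'⟩))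
    · exact Or.inl ((subset_sdiff.2 ⟨hMA', hMA₁⟩).trans subset_union_left)
  · have hBM : B ⊆ M := by
      rcases hF M hM B hB with hMB | hBM | hMB
      · exact absurd (disjoint_self.1 (hAB.mono_right (hAM.trans hMB))) hAne.ne_empty
      · exact hBM
      · rcases hP M hM with hMP | hPM | hMP
        · exact absurd (subset_antisymm (hMB.left_le_of_le_sup_right hMP) hAM) hMA
        · exact absurd (disjoint_self.1 (hMB.mono_left (subset_union_right.trans hPM)))
            hBne.ne_empty
        · exact absurd (disjoint_self.1 ((disjoint_union_right.1 hMP).1.mono_left hAM))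
            hAne.ne_empty
    exact Or.inr (Or.inl (union_subset (sdiff_subset.trans hAM) hBM))
  · rcases hF M hM B hB with hMB | hBM | hMB
    · exact Or.inl (hMB.trans subset_union_right)
    · rcases hP M hM with hMP | hPM | hMP
      · exact Or.inl ((hMA'.left_le_of_le_sup_left hMP).trans subset_union_right)
      · exact absurd (disjoint_self.1 (hMA'.mono_left (subset_union_left.trans hPM)))
          hAne.ne_empty
      · exact absurd (disjoint_self.1 ((disjoint_union_right.1 hMP).2.mono_left hBM))
          hBne.ne_empty
    · exact Or.inr (Or.inr (disjoint_union_right.2 ⟨hMA'.mono_right sdiff_subset, hMB⟩))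

theorem disjoint_rotate (hAB : Disjoint A B) (hA₁A : A₁ ⊆ A) : Disjoint A₁ (A \ A₁ ∪ B) :=
  disjoint_union_right.2 ⟨disjoint_sdiff, hAB.mono_left hA₁A⟩

theorem not_laminar_rotate (hAB : Disjoint A B) (hBne : B.Nonempty) (hA₁ne : A₁.Nonempty)
    (hA₁A : A₁ ⊂ A) : ¬Laminar A (A \ A₁ ∪ B) := by
  rintro (h | h | h)
  · exact hA₁ne.ne_empty
      (disjoint_self.1 ((disjoint_rotate hAB hA₁A.subset).mono_right (hA₁A.subset.trans h)))
  · exact hBne.ne_empty (disjoint_self.1 (hAB.mono_left (subset_union_right.trans h)))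
  · have : A \ A₁ = ∅ := disjoint_self.1 ((disjoint_union_right.1 h).1.mono_left sdiff_subset)
    exact hA₁A.not_subset (sdiff_eq_empty_iff_subset.1 this)

theorem card_rotate (hAB : Disjoint A B) (hA₁A : A₁ ⊆ A) :
    #(A \ A₁ ∪ B) + #A₁ = #A + #B := by
  rw [card_union_of_disjoint (hAB.mono_left sdiff_subset), card_sdiff_of_subset hA₁A]
  have := card_le_card hA₁A
  omega

theorem IsLaminar.isLaminar_rotate (hF : IsLaminar F) (hA : A ∈ F) (hB : B ∈ F)
    (hAne : A.Nonempty) (hBne : B.Nonempty) (hAB : Disjoint A B)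
    (hP : ∀ M ∈ F, Laminar M (A ∪ B)) (hA₁ : ∀ M ∈ F, M ⊂ A → M ⊆ A₁ ∨ Disjoint M A₁) :
    IsLaminar (insert (A \ A₁ ∪ B) (F.erase A)) := by
  have hrot := fun M (hM : M ∈ F.erase A) =>
    hF.laminar_rotate hA hB hAne hBne hAB hP hA₁ (mem_of_mem_erase hM) (ne_of_mem_erase hM)
  intro X hX Y hY
  rcases mem_insert.1 hX with rfl | hX <;> rcases mem_insert.1 hY with rfl | hY
  exacts [Laminar.refl _, (hrot Y hY).symm, hrot X hX,
    hF X (mem_of_mem_erase hX) Y (mem_of_mem_erase hY)]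

theorem card_rotate_add_two_le [Fintype α] {z : α} (hzA : z ∉ A) (hzB : z ∉ B)
    (hAB : Disjoint A B) (hA₁ne : A₁.Nonempty) (hA₁A : A₁ ⊆ A) :
    #(A \ A₁ ∪ B) + 2 ≤ Fintype.card α := by
  have hdisj : Disjoint (A \ A₁ ∪ B) (insert z A₁) :=
    disjoint_insert_right.2 ⟨by simp [hzA, hzB], (disjoint_rotate hAB hA₁A).symm⟩
  have := card_le_univ (A \ A₁ ∪ B ∪ insert z A₁)
  rw [card_union_of_disjoint hdisj, card_insert_of_notMem fun h => hzA (hA₁A h)] at this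
  have := hA₁ne.card_pos
  omega

end Rotation

theorem Fin.le_apply_iff_of_monotone {n : ℕ} {f : Fin n → ℕ} (hf : Monotone f) (t : ℕ)
    (i : Fin n) : t ≤ f i ↔ n - #{j | t ≤ f j} ≤ i := by
  constructor
  · intro h
    have : Ici i ⊆ ({j | t ≤ f j} : Finset (Fin n)) := fun j hj =>
      mem_filter.2 ⟨mem_univ j, h.trans (hf (mem_Ici.1 hj))⟩
    have := card_le_card this
    rw [Fin.card_Ici] at this
    omega
  · intro h
    by_contra! hlt
    have : ({j | t ≤ f j} : Finset (Fin n)) ⊆ Ioi i := fun j hj =>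
      mem_Ioi.2 (lt_of_not_ge fun hji => (hf hji).not_gt (hlt.trans_le (mem_filter.1 hj).2))
    have := card_le_card this
    rw [Fin.card_Ioi] at this
    omega

/-- Sorting the values of `g` turns every superlevel set of `g` into a final segment. -/
theorem exists_equiv_le_iff {n : ℕ} (g : Fin n → ℕ) :
    ∃ π : Fin n ≃ Fin n, ∀ t x, t ≤ g x ↔ n - #{y | t ≤ g y} ≤ π x := by
  set σ := Tuple.sort g
  refine ⟨σ.symm, fun t x => ?_⟩
  have hcard : #{j | t ≤ g (σ j)} = #{y | t ≤ g y} :=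
    card_nbij' σ σ.symm (by intro j; simp) (by intro y; simp) (by intro j _; simp)
      (by intro y _; simp)
  have := Fin.le_apply_iff_of_monotone (Tuple.monotone_sort g) t (σ.symm x)
  simp only [Function.comp_apply, σ, Equiv.apply_symm_apply] at this
  rw [this, hcard]

/-- In a chain, the members containing a point `x ∉ A` are among the strict supersets of `A`. -/
theorem IsChain.eq_filter_card_le {α : Type*} [Fintype α] [DecidableEq α]
    {F : Finset (Finset α)} (hF : IsChain (· ⊆ ·) (F : Set (Finset α))) {A : Finset α}
    (hA : A ∈ F) : A = ({x | #{X ∈ F | A ⊆ X} ≤ #{X ∈ F | x ∈ X}} : Finset α) := by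
  ext x
  simp only [mem_filter, mem_univ, true_and]
  constructor
  · intro hx
    exact card_le_card fun X hX => by
      simp only [mem_filter] at hX ⊢
      exact ⟨hX.1, hX.2 hx⟩
  · intro hle
    by_contra hx
    have : {X ∈ F | x ∈ X} ⊆ {X ∈ F | A ⊆ X}.erase A := by
      intro X hX
      simp only [mem_filter, mem_erase] at hX ⊢
      refine ⟨fun h => hx (h ▸ hX.2), hX.1, ?_⟩
      rcases eq_or_ne X A with rfl | hXA
      · exact subset_rfl
      · exact (hF.total hX.1 hA).resolve_left fun h => hx (h hX.2)
    exact (card_le_card this).not_gt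
      ((card_erase_lt_of_mem (mem_filter.2 ⟨hA, subset_rfl⟩)).trans_le hle)

theorem IsChain.exists_equiv_eq_filter {n : ℕ} {F : Finset (Finset (Fin n))}
    (hF : IsChain (· ⊆ ·) (F : Set (Finset (Fin n)))) :
    ∃ π : Fin n ≃ Fin n, ∀ A ∈ F, A = ({x | n - #A ≤ π x} : Finset (Fin n)) := by
  obtain ⟨π, hπ⟩ := exists_equiv_le_iff fun x => #{X ∈ F | x ∈ X}
  refine ⟨π, fun A hA => ?_⟩
  have hAeq := hF.eq_filter_card_le hA
  ext x
  conv_lhs => rw [hAeq]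
  rw [mem_filter, mem_filter, hπ, ← hAeq]


theorem card_eq_two_mul_card_filter_notMem {α : Type*} [Fintype α] [DecidableEq α]
    {S : Finset (Finset α)} (hS : ∀ X ∈ S, Xᶜ ∈ S) (z : α) : #S = 2 * #{X ∈ S | z ∉ X} := by
  have hcompl : #{X ∈ S | z ∈ X} = #{X ∈ S | z ∉ X} :=
    card_nbij' compl compl (fun X hX => by simp_all) (fun X hX => by simp_all)
      (fun X _ => compl_compl X) (fun X _ => compl_compl X)
  rw [← card_filter_add_card_filter_not (fun X => z ∈ X), hcompl]
  ring

theorem Compatible.symm {n : ℕ} {A B : Finset (Fin n)} (h : Compatible A B) : Compatible B A := by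
  rcases h with h | h | h | h
  exacts [Or.inr (Or.inl h), Or.inl h, Or.inr (Or.inr (Or.inl (inter_comm A B ▸ h))),
    Or.inr (Or.inr (Or.inr (union_comm A B ▸ h)))]

theorem Compatible.compl_right {n : ℕ} {A B : Finset (Fin n)} (h : Compatible A B) :
    Compatible A Bᶜ := by
  unfold Compatible at h ⊢
  simp only [subset_iff, Finset.ext_iff, mem_inter, mem_union, mem_compl, mem_univ, notMem_empty,
    iff_true, iff_false] at h ⊢
  rcases h with h | h | h | h
  · exact Or.inr (Or.inr (Or.inl fun x hx => hx.2 (h hx.1)))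
  · exact Or.inr (Or.inr (Or.inr fun x => (em (x ∈ B)).imp_left (@h x)))
  · exact Or.inl fun x hx hxB => h x ⟨hx, hxB⟩
  · exact Or.inr (Or.inl fun x hx => (h x).resolve_right hx)

theorem Laminar.compatible {n : ℕ} {A B : Finset (Fin n)} (h : Laminar A B) : Compatible A B := by
  rcases h with h | h | h
  exacts [Or.inl h, Or.inr (Or.inl h), Or.inr (Or.inr (Or.inl (disjoint_iff_inter_eq_empty.1 h)))]

theorem compl_mem_union_image_compl {α : Type*} [Fintype α] [DecidableEq α]
    {F : Finset (Finset α)} {X : Finset α} (hX : X ∈ F ∪ F.image compl) :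
    Xᶜ ∈ F ∪ F.image compl := by
  simp only [mem_union, mem_image] at hX ⊢
  rcases hX with hX | ⟨A, hA, rfl⟩
  · exact Or.inr ⟨X, hX, rfl⟩
  · exact Or.inl (by simpa using hA)

theorem filter_notMem_union_image_compl {α : Type*} [Fintype α] [DecidableEq α]
    {F : Finset (Finset α)} {z : α} (hz : ∀ A ∈ F, z ∉ A) :
    {X ∈ F ∪ F.image compl | z ∉ X} = F := by
  ext X
  simp only [mem_filter, mem_union, mem_image]
  constructor
  · rintro ⟨hX | ⟨A, hA, rfl⟩, hzX⟩
    · exact hX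
    · exact absurd (mem_compl.2 (hz A hA)) hzX
  · exact fun hX => ⟨Or.inl hX, hz X hX⟩

theorem SimpleGraph.exists_reachable_of_potential {V : Type*} (G : SimpleGraph V) {P : V → Prop}
    (Φ : V → ℕ) (N : ℕ) (hΦ : ∀ v, Φ v ≤ N) (hstep : ∀ v, ¬P v → ∃ w, G.Adj v w ∧ Φ v < Φ w)
    (v : V) : ∃ w, P w ∧ G.Reachable v w := by
  induction hk : N - Φ v using Nat.strong_induction_on generalizing v with
  | _ k ih =>
  by_cases hv : P v
  · exact ⟨v, hv, .refl v⟩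
  · obtain ⟨w, hvw, hlt⟩ := hstep v hv
    obtain ⟨u, hu, hwu⟩ := ih (N - Φ w) (by have := hΦ w; omega) w rfl
    exact ⟨u, hu, hvw.reachable.trans hwu⟩

namespace TrivalentTree

variable {n : ℕ}

theorem compl_mem_splits (T : TrivalentTree n) {A : Finset (Fin n)} (hA : A ∈ T.splits) :
    Aᶜ ∈ T.splits :=
  compl_eq_univ_sdiff A ▸ T.compl_mem A hA

/-- Rooting `T` at the leaf `z`, the cluster below an edge is the side of its split avoiding `z`. -/
def clusters (T : TrivalentTree n) (z : Fin n) : Finset (Finset (Fin n)) :=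
  {X ∈ T.splits | z ∉ X}

theorem mem_clusters {T : TrivalentTree n} {z : Fin n} {X : Finset (Fin n)} :
    X ∈ T.clusters z ↔ X ∈ T.splits ∧ z ∉ X :=
  mem_filter

theorem splits_eq_clusters_union (T : TrivalentTree n) (z : Fin n) :
    T.splits = T.clusters z ∪ (T.clusters z).image compl := by
  ext X
  simp only [mem_union, mem_image, mem_clusters]
  constructor
  · intro hX
    by_cases hz : z ∈ X
    · exact Or.inr ⟨Xᶜ, ⟨T.compl_mem_splits hX, by simpa using hz⟩, compl_compl X⟩
    · exact Or.inl ⟨hX, hz⟩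
  · rintro (⟨hX, -⟩ | ⟨Y, ⟨hY, -⟩, rfl⟩)
    exacts [hX, T.compl_mem_splits hY]

theorem card_clusters (T : TrivalentTree n) (z : Fin n) : #(T.clusters z) = n - 3 := by
  have := card_eq_two_mul_card_filter_notMem (fun _ => T.compl_mem_splits) z
  rw [T.card_eq] at this
  exact (Nat.eq_of_mul_eq_mul_left two_pos this).symm

theorem isLaminar_clusters (T : TrivalentTree n) (z : Fin n) : IsLaminar (T.clusters z) := by
  intro A hA B hB
  rw [mem_clusters] at hA hB
  rcases T.compat A hA.1 B hB.1 with h | h | h | h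
  · exact Or.inl h
  · exact Or.inr (Or.inl h)
  · exact Or.inr (Or.inr (disjoint_iff_inter_eq_empty.2 h))
  · exact absurd (h ▸ mem_univ z) (by simp [hA.2, hB.2])

theorem card_splits_sdiff (T T' : TrivalentTree n) (z : Fin n) :
    #(T.splits \ T'.splits) = 2 * #(T.clusters z \ T'.clusters z) := by
  have hS : ∀ X ∈ T.splits \ T'.splits, Xᶜ ∈ T.splits \ T'.splits := fun X hX => by
    rw [mem_sdiff] at hX ⊢
    exact ⟨T.compl_mem_splits hX.1, fun h => hX.2 (compl_compl X ▸ T'.compl_mem_splits h)⟩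
  rw [card_eq_two_mul_card_filter_notMem hS z]
  congr 2
  ext X
  simp only [mem_filter, mem_sdiff, mem_clusters]
  tauto

theorem nniAdj_iff (T T' : TrivalentTree n) (z : Fin n) :
    (NNIGraph n).Adj T T' ↔
      #(T.clusters z \ T'.clusters z) = 1 ∧ #(T'.clusters z \ T.clusters z) = 1 := by
  change _ ∧ _ ↔ _
  rw [card_splits_sdiff T T' z, card_splits_sdiff T' T z]
  omega

def ofClusters (z : Fin n) (F : Finset (Finset (Fin n))) (hz : ∀ A ∈ F, z ∉ A)
    (hcard : ∀ A ∈ F, 2 ≤ #A ∧ #A ≤ n - 2) (hF : IsLaminar F) (hFcard : #F = n - 3) :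
    TrivalentTree n where
  splits := F ∪ F.image compl
  card_le := by
    simp only [mem_union, mem_image]
    rintro _ (hA | ⟨A, hA, rfl⟩)
    · exact hcard _ hA
    · rw [card_compl, Fintype.card_fin]
      have := hcard A hA
      omega
  compat := by
    have hcompl : ∀ A ∈ F, ∀ B ∈ F, Compatible A Bᶜ := fun A hA B hB =>
      ((hF A hA B hB).compatible).compl_right
    simp only [mem_union, mem_image]
    rintro _ (hA | ⟨A, hA, rfl⟩) _ (hB | ⟨B, hB, rfl⟩)
    · exact (hF _ hA _ hB).compatible
    · exact hcompl _ hA B hB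
    · exact (hcompl _ hB A hA).symm
    · simpa using (hcompl B hB A hA).symm.compl_right
  compl_mem X hX := compl_eq_univ_sdiff X ▸ compl_mem_union_image_compl hX
  card_eq := by
    rw [card_eq_two_mul_card_filter_notMem (fun _ => compl_mem_union_image_compl) z,
      filter_notMem_union_image_compl hz, hFcard]

theorem clusters_ofClusters (z : Fin n) (F : Finset (Finset (Fin n))) (hz : ∀ A ∈ F, z ∉ A)
    (hcard : ∀ A ∈ F, 2 ≤ #A ∧ #A ≤ n - 2) (hF : IsLaminar F) (hFcard : #F = n - 3) :
    (ofClusters z F hz hcard hF hFcard).clusters z = F :=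
  filter_notMem_union_image_compl hz

theorem isCaterpillar_of_isChain (T : TrivalentTree n) (z : Fin n)
    (h : IsChain (· ⊆ ·) (T.clusters z : Set (Finset (Fin n)))) : IsCaterpillar T := by
  obtain ⟨π, hπ⟩ := h.exists_equiv_eq_filter
  have hC : T.clusters z =
      (Icc 2 (n - 2)).image fun k : ℕ => ({i | k ≤ (π i : ℕ)} : Finset (Fin n)) := by
    refine eq_of_subset_of_card_le (fun A hA => mem_image.2 ⟨n - #A, ?_, (hπ A hA).symm⟩) ?_
    · have := T.card_le A (mem_clusters.1 hA).1
      rw [mem_Icc]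
      omega
    · refine card_image_le.trans ?_
      rw [Nat.card_Icc, card_clusters]
      omega
  refine ⟨π, ?_⟩
  rw [T.splits_eq_clusters_union z, hC, image_image, union_comm]
  congr 2
  funext k
  simp [compl_filter]

def clusterWeight (T : TrivalentTree n) (z : Fin n) : ℕ :=
  ∑ X ∈ T.clusters z, #X

theorem clusterWeight_le (T : TrivalentTree n) (z : Fin n) :
    T.clusterWeight z ≤ (n - 3) * (n - 2) := by
  have := sum_le_card_nsmul (T.clusters z) card (n - 2) fun X hX =>
    (T.card_le X (mem_clusters.1 hX).1).2
  rwa [card_clusters, smul_eq_mul] at this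

theorem exists_adj_clusterWeight_lt_of_rotate (T : TrivalentTree n) (z : Fin n)
    {A B A₁ : Finset (Fin n)} (hA : A ∈ T.clusters z) (hB : B ∈ T.clusters z)
    (hAB : Disjoint A B) (hP : ∀ M ∈ T.clusters z, Laminar M (A ∪ B)) (hA₁ne : A₁.Nonempty)
    (hA₁A : A₁ ⊂ A) (hA₁ : ∀ M ∈ T.clusters z, M ⊂ A → M ⊆ A₁ ∨ Disjoint M A₁)
    (hlt : #A₁ < #B) :
    ∃ T' : TrivalentTree n, (NNIGraph n).Adj T T' ∧ T.clusterWeight z < T'.clusterWeight z := by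
  set C := T.clusters z
  set B' := A \ A₁ ∪ B
  have hcardC : ∀ X ∈ C, 2 ≤ #X ∧ #X ≤ n - 2 := fun X hX => T.card_le X (mem_clusters.1 hX).1
  have hAne : A.Nonempty := card_pos.1 (by have := hcardC A hA; omega)
  have hBne : B.Nonempty := card_pos.1 (by have := hcardC B hB; omega)
  have hzA := (mem_clusters.1 hA).2
  have hzB := (mem_clusters.1 hB).2
  have hB'C : B' ∉ C := fun h =>
    not_laminar_rotate hAB hBne hA₁ne hA₁A (T.isLaminar_clusters z A hA B' h)
  have hAB' : #A < #B' := by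
    have : #B' + #A₁ = #A + #B := card_rotate hAB hA₁A.subset
    omega
  set F := insert B' (C.erase A)
  have hF : ∀ X ∈ F, z ∉ X ∧ 2 ≤ #X ∧ #X ≤ n - 2 := by
    simp only [F, mem_insert, mem_erase]
    rintro X (rfl | ⟨-, hX⟩)
    · have : #B' + 2 ≤ Fintype.card (Fin n) :=
        card_rotate_add_two_le hzA hzB hAB hA₁ne hA₁A.subset
      rw [Fintype.card_fin] at this
      exact ⟨by simp [B', hzA, hzB], by have := hcardC A hA; omega, by omega⟩
    · exact ⟨(mem_clusters.1 hX).2, hcardC X hX⟩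
  have hFcard : #F = n - 3 := by
    rw [card_insert_of_notMem fun h => hB'C (mem_of_mem_erase h), card_erase_add_one hA,
      card_clusters]
  refine ⟨ofClusters z F (fun X hX => (hF X hX).1) (fun X hX => (hF X hX).2)
    ((T.isLaminar_clusters z).isLaminar_rotate hA hB hAne hBne hAB hP hA₁) hFcard, ?_, ?_⟩
  · rw [nniAdj_iff T _ z, clusters_ofClusters, sdiff_insert_erase hA hB'C,
      insert_erase_sdiff hB'C, card_singleton, card_singleton]
    exact ⟨rfl, rfl⟩
  · rw [clusterWeight, clusterWeight, clusters_ofClusters,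
      sum_insert fun h => hB'C (mem_of_mem_erase h), ← sum_erase_add _ _ hA]
    omega

theorem exists_adj_clusterWeight_lt (T : TrivalentTree n) (z : Fin n)
    (h : ¬IsChain (· ⊆ ·) (T.clusters z : Set (Finset (Fin n)))) :
    ∃ T' : TrivalentTree n, (NNIGraph n).Adj T T' ∧ T.clusterWeight z < T'.clusterWeight z := by
  have hC := T.isLaminar_clusters z
  have hnontriv : ∀ X ∈ T.clusters z, X.Nontrivial := fun X hX =>
    one_lt_card_iff_nontrivial.1 (by have := T.card_le X (mem_clusters.1 hX).1; omega)
  obtain ⟨A, hA, B, hB, hAB, hP⟩ :=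
    hC.exists_disjoint_forall_laminar_union (hC.exists_disjoint_of_not_isChain h)
  obtain ⟨A₁, hA₁ne, hA₁A, hA₁⟩ := hC.exists_block (hnontriv A hA)
  obtain ⟨B₁, hB₁ne, hB₁B, hB₁⟩ := hC.exists_block (hnontriv B hB)
  rcases lt_or_ge #A₁ #B with hlt | hge
  · exact T.exists_adj_clusterWeight_lt_of_rotate z hA hB hAB hP hA₁ne hA₁A hA₁ hlt
  · refine T.exists_adj_clusterWeight_lt_of_rotate z hB hA hAB.symm
      (by simpa only [union_comm] using hP) hB₁ne hB₁B hB₁ ?_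
    have := card_lt_card hA₁A
    have := card_lt_card hB₁B
    omega

end TrivalentTree

/-- Every trivalent tree with n ≥ 4 labeled leaves can be transformed into a
caterpillar by a finite sequence of NNI moves. -/
theorem reachable_caterpillar (n : ℕ) (hn : 4 ≤ n) (T : TrivalentTree n) :
    ∃ T' : TrivalentTree n, IsCaterpillar T' ∧ (NNIGraph n).Reachable T T' := by
  let z : Fin n := ⟨0, by omega⟩
  obtain ⟨T', hchain, hreach⟩ := (NNIGraph n).exists_reachable_of_potential
    (P := fun T' => IsChain (· ⊆ ·) (T'.clusters z : Set (Finset (Fin n))))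
    (fun T' => T'.clusterWeight z) _ (fun T' => T'.clusterWeight_le z)
    (fun T' => T'.exists_adj_clusterWeight_lt z) T
  exact ⟨T', T'.isCaterpillar_of_isChain z hchain, hreach⟩
end
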